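/- For every n ≥ 1, the number of Dyck words of length 2n fixed by the reversal-with-swap involution is at most C(n, ⌊n/2⌋), and C(n,⌊n/2⌋)/c_n → 0, hence the proportion of asymmetric Dyck words (not fixed by the involution) among all Dyck words of length 2n tends to 1 as n → ∞. -/
import Mathlib


/-- Number of up-steps (`true`) among the first `i` steps of `w`. -/
def ups {n : ℕ} (w : Fin n → Bool) (i : ℕ) : ℕ :=
  (Finset.univ.filter fun j : Fin n => (j : ℕ) < i ∧ w j = true).card

/-- Number of down-steps (`false`) among the first `i` steps of `w`. -/
def downs {n : ℕ} (w : Fin n → Bool) (i : ℕ) : ℕ :=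
  (Finset.univ.filter fun j : Fin n => (j : ℕ) < i ∧ w j = false).card

/-- A left factor of a Dyck path: every prefix has at least as many ups as downs. -/
def IsLeftFactor {n : ℕ} (w : Fin n → Bool) : Prop :=
  ∀ i ≤ n, downs w i ≤ ups w i

/-- A Dyck word: a left factor with equally many ups and downs overall. -/
def IsDyckWord {n : ℕ} (w : Fin n → Bool) : Prop :=
  IsLeftFactor w ∧ ups w n = downs w n

/-- The involution on words reversing the word and swapping up-steps with down-steps. -/
def revSwap {n : ℕ} (w : Fin n → Bool) : Fin n → Bool := fun j => ! w j.rev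

open Finset

lemma card_filter_lt_succ {m : ℕ} (p : Fin m → Prop) [DecidablePred p] (i : ℕ) :
    (univ.filter fun j : Fin m => (j : ℕ) < i + 1 ∧ p j).card =
      (univ.filter fun j : Fin m => (j : ℕ) < i ∧ p j).card +
        (if h : i < m then (if p ⟨i, h⟩ then 1 else 0) else 0) := by
  rcases lt_or_ge i m with h | h
  · rw [dif_pos h]
    have hsplit : (univ.filter fun j : Fin m => (j : ℕ) < i + 1 ∧ p j) =
        (univ.filter fun j : Fin m => (j : ℕ) < i ∧ p j) ∪
          (univ.filter fun j : Fin m => j = ⟨i, h⟩ ∧ p j) := by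
      ext j
      simp only [mem_filter, mem_union, mem_univ, true_and]
      constructor
      · rintro ⟨hj, hp⟩
        rcases Nat.lt_succ_iff_lt_or_eq.mp hj with h' | h'
        · exact Or.inl ⟨h', hp⟩
        · exact Or.inr ⟨Fin.ext h', hp⟩
      · rintro (⟨hj, hp⟩ | ⟨hj, hp⟩)
        · exact ⟨Nat.lt_succ_of_lt hj, hp⟩
        · exact ⟨by rw [hj]; exact Nat.lt_succ_self i, hp⟩
    rw [hsplit, card_union_of_disjoint]
    · congr 1
      by_cases hp : p ⟨i, h⟩
      · rw [if_pos hp]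
        rw [show (univ.filter fun j : Fin m => j = ⟨i, h⟩ ∧ p j) = {⟨i, h⟩} by
          ext j; simp only [mem_filter, mem_univ, true_and, mem_singleton]
          exact ⟨fun ⟨a, _⟩ => a, fun a => ⟨a, a ▸ hp⟩⟩]
        exact card_singleton _
      · rw [if_neg hp]
        rw [show (univ.filter fun j : Fin m => j = ⟨i, h⟩ ∧ p j) = ∅ by
          ext j; simp only [mem_filter, mem_univ, true_and, notMem_empty, iff_false]
          rintro ⟨rfl, hp'⟩; exact hp hp']
        exact card_empty
    · rw [Finset.disjoint_left]
      rintro j hj hj'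
      simp only [mem_filter] at hj hj'
      obtain ⟨-, hji, -⟩ := hj
      obtain ⟨-, rfl, -⟩ := hj'
      exact absurd hji (lt_irrefl i)
  · rw [dif_neg (by omega)]
    simp only [add_zero]
    apply congrArg Finset.card
    ext j
    have := j.isLt
    simp only [mem_filter, mem_univ, true_and]
    constructor
    · rintro ⟨_, hp⟩; exact ⟨by omega, hp⟩
    · rintro ⟨_, hp⟩; exact ⟨by omega, hp⟩

lemma ups_zero {m : ℕ} (w : Fin m → Bool) : ups w 0 = 0 := by
  unfold ups
  rw [show (univ.filter fun j : Fin m => (j:ℕ) < 0 ∧ w j = true) = ∅ by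
    ext j; simp]
  exact card_empty

lemma downs_zero {m : ℕ} (w : Fin m → Bool) : downs w 0 = 0 := by
  unfold downs
  rw [show (univ.filter fun j : Fin m => (j:ℕ) < 0 ∧ w j = false) = ∅ by
    ext j; simp]
  exact card_empty

lemma ups_succ {m : ℕ} (w : Fin m → Bool) (i : ℕ) :
    ups w (i + 1) = ups w i + (if h : i < m then (if w ⟨i, h⟩ then 1 else 0) else 0) := by
  unfold ups
  rw [card_filter_lt_succ (fun j : Fin m => w j = true) i]

lemma downs_succ {m : ℕ} (w : Fin m → Bool) (i : ℕ) :
    downs w (i + 1) = downs w i + (if h : i < m then (if w ⟨i, h⟩ then 0 else 1) else 0) := by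
  unfold downs
  rw [card_filter_lt_succ (fun j : Fin m => w j = false) i]
  rcases lt_or_ge i m with h | h
  · rw [dif_pos h, dif_pos h]; by_cases hw : w ⟨i, h⟩ <;> simp [hw]
  · rw [dif_neg (show ¬ i < m by omega), dif_neg (show ¬ i < m by omega)]

lemma ups_stable {m : ℕ} (w : Fin m → Bool) {i : ℕ} (h : m ≤ i) : ups w i = ups w m := by
  unfold ups; apply congrArg Finset.card; ext j; have := j.isLt
  simp only [mem_filter, mem_univ, true_and]
  constructor <;> rintro ⟨_, hp⟩ <;> exact ⟨by omega, hp⟩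

lemma downs_stable {m : ℕ} (w : Fin m → Bool) {i : ℕ} (h : m ≤ i) : downs w i = downs w m := by
  unfold downs; apply congrArg Finset.card; ext j; have := j.isLt
  simp only [mem_filter, mem_univ, true_and]
  constructor <;> rintro ⟨_, hp⟩ <;> exact ⟨by omega, hp⟩

lemma ups_add_downs {m : ℕ} (w : Fin m → Bool) (i : ℕ) (hi : i ≤ m) :
    ups w i + downs w i = i := by
  induction i with
  | zero => simp [ups_zero, downs_zero]
  | succ k ih =>
    rw [ups_succ, downs_succ, dif_pos (by omega), dif_pos (by omega)]
    have := ih (by omega)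
    by_cases hw : w ⟨k, by omega⟩ <;> simp [hw] <;> omega

open DyckStep in
/-- The list of Dyck steps corresponding to a word. -/
def toSteps {m : ℕ} (w : Fin m → Bool) : List DyckStep :=
  List.ofFn fun i => if w i then U else D

open DyckStep

lemma length_toSteps {m : ℕ} (w : Fin m → Bool) : (toSteps w).length = m := by
  simp [toSteps]

lemma count_U_take_toSteps {m : ℕ} (w : Fin m → Bool) (i : ℕ) :
    ((toSteps w).take i).count U = ups w i := by
  induction i with
  | zero => simp [ups_zero]
  | succ k ih =>
    rw [List.take_succ, List.count_append, ih, ups_succ]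
    congr 1
    rcases lt_or_ge k m with h | h
    · rw [dif_pos h]
      have : (toSteps w)[k]? = some (if w ⟨k, h⟩ then U else D) := by
        rw [List.getElem?_eq_getElem (by simpa [length_toSteps] using h)]
        simp [toSteps]
      rw [this]
      by_cases hw : w ⟨k, h⟩ <;> simp [hw]
    · rw [dif_neg (by omega)]
      rw [List.getElem?_eq_none (by simpa [length_toSteps] using h)]
      simp

lemma count_D_take_toSteps {m : ℕ} (w : Fin m → Bool) (i : ℕ) :
    ((toSteps w).take i).count D = downs w i := by
  induction i with
  | zero => simp [downs_zero]
  | succ k ih =>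
    rw [List.take_succ, List.count_append, ih, downs_succ]
    congr 1
    rcases lt_or_ge k m with h | h
    · rw [dif_pos h]
      have : (toSteps w)[k]? = some (if w ⟨k, h⟩ then U else D) := by
        rw [List.getElem?_eq_getElem (by simpa [length_toSteps] using h)]
        simp [toSteps]
      rw [this]
      by_cases hw : w ⟨k, h⟩ <;> simp [hw]
    · rw [dif_neg (by omega)]
      rw [List.getElem?_eq_none (by simpa [length_toSteps] using h)]
      simp

lemma count_U_toSteps {m : ℕ} (w : Fin m → Bool) : (toSteps w).count U = ups w m := by
  rw [← count_U_take_toSteps w m, List.take_of_length_le (le_of_eq (length_toSteps w))]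

lemma count_D_toSteps {m : ℕ} (w : Fin m → Bool) : (toSteps w).count D = downs w m := by
  rw [← count_D_take_toSteps w m, List.take_of_length_le (le_of_eq (length_toSteps w))]

/-- The Dyck word associated to `w` satisfying `IsDyckWord`. -/
def toDyckWord {m : ℕ} (w : Fin m → Bool) (hw : IsDyckWord w) : DyckWord where
  toList := toSteps w
  count_U_eq_count_D := by rw [count_U_toSteps, count_D_toSteps]; exact hw.2
  count_D_le_count_U i := by
    rw [count_U_take_toSteps, count_D_take_toSteps]
    rcases le_or_gt i m with h | h
    · exact hw.1 i h
    · rw [ups_stable w h.le, downs_stable w h.le]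
      exact hw.1 m le_rfl

/-- Inverse map: the word encoded by a Dyck word of semilength `n`. -/
def ofSteps (n : ℕ) (p : DyckWord) (hp : p.toList.length = 2 * n) : Fin (2 * n) → Bool :=
  fun i => decide (p.toList[(i : ℕ)]'(by rw [hp]; exact i.isLt) = U)

lemma toSteps_ofSteps (n : ℕ) (p : DyckWord) (hp : p.toList.length = 2 * n) :
    toSteps (ofSteps n p hp) = p.toList := by
  apply List.ext_getElem (by rw [length_toSteps, hp])
  intro k h1 h2
  simp only [toSteps, List.getElem_ofFn, ofSteps]
  rcases (p.toList[k]'h2).dichotomy with hU | hU <;> simp [hU]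

lemma isDyckWord_ofSteps (n : ℕ) (p : DyckWord) (hp : p.toList.length = 2 * n) :
    IsDyckWord (ofSteps n p hp) := by
  have hts := toSteps_ofSteps n p hp
  constructor
  · intro i _
    have := p.count_D_le_count_U i
    rwa [← hts, count_U_take_toSteps, count_D_take_toSteps] at this
  · have := p.count_U_eq_count_D
    rwa [← hts, count_U_toSteps, count_D_toSteps] at this

lemma length_of_semilength (n : ℕ) (p : DyckWord) (hp : p.semilength = n) :
    p.toList.length = 2 * n := by
  rw [← p.two_mul_semilength_eq_length, hp]

/-- The equivalence between our encoding and Mathlib's `DyckWord`s of semilength `n`. -/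
def dyckEquiv (n : ℕ) :
    {w : Fin (2 * n) → Bool // IsDyckWord w} ≃ {p : DyckWord // p.semilength = n} where
  toFun w := ⟨toDyckWord w.1 w.2, by
    have h1 : 2 * (toDyckWord w.1 w.2).semilength = 2 * n := by
      rw [DyckWord.two_mul_semilength_eq_length]
      exact length_toSteps w.1
    omega⟩
  invFun p := ⟨ofSteps n p.1 (length_of_semilength n p.1 p.2),
    isDyckWord_ofSteps n p.1 (length_of_semilength n p.1 p.2)⟩
  left_inv w := by
    apply Subtype.ext
    funext i
    show decide ((toSteps w.1)[(i : ℕ)]'_ = U) = w.1 i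
    simp only [toSteps, List.getElem_ofFn]
    by_cases hw : w.1 i <;> simp [hw]
  right_inv p := by
    apply Subtype.ext
    apply DyckWord.ext
    exact toSteps_ofSteps n p.1 (length_of_semilength n p.1 p.2)

lemma card_dyck (n : ℕ) :
    Nat.card {w : Fin (2 * n) → Bool // IsDyckWord w} = catalan n := by
  rw [Nat.card_congr (dyckEquiv n), Nat.card_eq_fintype_card,
    DyckWord.card_dyckWord_semilength_eq_catalan]

lemma card_dyck_odd (m : ℕ) (hm : ¬ 2 ∣ m) :
    Nat.card {w : Fin m → Bool // IsDyckWord w} = 0 := by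
  rw [Nat.card_eq_zero]
  left
  constructor
  rintro ⟨w, hw⟩
  have h1 := ups_add_downs w m le_rfl
  have h2 := hw.2
  omega

lemma ups_castLE {m n : ℕ} (h : n ≤ m) (w : Fin m → Bool) {i : ℕ} (hi : i ≤ n) :
    ups (fun j : Fin n => w (Fin.castLE h j)) i = ups w i := by
  induction i with
  | zero => rw [ups_zero, ups_zero]
  | succ k ih =>
    rw [ups_succ, ups_succ, dif_pos (show k < n by omega), dif_pos (show k < m by omega),
      ih (by omega)]
    simp only [Fin.castLE_mk]

lemma downs_castLE {m n : ℕ} (h : n ≤ m) (w : Fin m → Bool) {i : ℕ} (hi : i ≤ n) :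
    downs (fun j : Fin n => w (Fin.castLE h j)) i = downs w i := by
  induction i with
  | zero => rw [downs_zero, downs_zero]
  | succ k ih =>
    rw [downs_succ, downs_succ, dif_pos (show k < n by omega), dif_pos (show k < m by omega),
      ih (by omega)]
    simp only [Fin.castLE_mk]

lemma init_eq_castLE {n : ℕ} (w : Fin (n + 1) → Bool) :
    Fin.init w = fun j : Fin n => w (Fin.castLE (Nat.le_succ n) j) :=
  funext fun j => congrArg w (Fin.ext rfl)

lemma ups_init {n : ℕ} (w : Fin (n + 1) → Bool) {i : ℕ} (hi : i ≤ n) :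
    ups (Fin.init w) i = ups w i := by
  rw [init_eq_castLE, ups_castLE _ _ hi]

lemma downs_init {n : ℕ} (w : Fin (n + 1) → Bool) {i : ℕ} (hi : i ≤ n) :
    downs (Fin.init w) i = downs w i := by
  rw [init_eq_castLE, downs_castLE _ _ hi]

lemma isLeftFactor_succ_iff {n : ℕ} (w : Fin (n + 1) → Bool) :
    IsLeftFactor w ↔ IsLeftFactor (Fin.init w) ∧
      (w (Fin.last n) = false → downs (Fin.init w) n < ups (Fin.init w) n) := by
  have hups : ups w (n + 1) = ups w n + (if w (Fin.last n) then 1 else 0) := by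
    rw [ups_succ, dif_pos (Nat.lt_succ_self n)]; rfl
  have hdowns : downs w (n + 1) = downs w n + (if w (Fin.last n) then 0 else 1) := by
    rw [downs_succ, dif_pos (Nat.lt_succ_self n)]; rfl
  constructor
  · intro hw
    refine ⟨fun i hi => ?_, fun hl => ?_⟩
    · rw [ups_init w hi, downs_init w hi]; exact hw i (by omega)
    · have h1 := hw (n + 1) le_rfl
      rw [hups, hdowns, hl] at h1
      simp only [Bool.false_eq_true, if_false] at h1
      rw [ups_init w le_rfl, downs_init w le_rfl]
      omega
  · rintro ⟨h1, h2⟩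
    intro i hi
    rcases Nat.lt_succ_iff_lt_or_eq.mp (Nat.lt_succ_of_le hi) with h | rfl
    · have := h1 i (by omega)
      rwa [ups_init w (by omega), downs_init w (by omega)] at this
    · rw [hups, hdowns]
      have h3 := h1 n le_rfl
      rw [ups_init w le_rfl, downs_init w le_rfl] at h3
      cases hl : w (Fin.last n) with
      | true => simp only [hl, if_true]; omega
      | false =>
        have := h2 hl
        rw [ups_init w le_rfl, downs_init w le_rfl] at this
        simp only [hl, Bool.false_eq_true, if_false]
        omega

open scoped Classical in
lemma card_leftFactor_succ (n : ℕ) :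
    Nat.card {w : Fin (n + 1) → Bool // IsLeftFactor w} +
      Nat.card {w : Fin n → Bool // IsDyckWord w} =
    2 * Nat.card {w : Fin n → Bool // IsLeftFactor w} := by
  rw [Nat.card_eq_fintype_card, Nat.card_eq_fintype_card, Nat.card_eq_fintype_card,
    Fintype.card_subtype, Fintype.card_subtype, Fintype.card_subtype]
  have hsplit : ((univ.filter (IsLeftFactor (n := n + 1))).filter
        (fun w => w (Fin.last n) = true)).card +
      ((univ.filter (IsLeftFactor (n := n + 1))).filter
        (fun w => ¬ (w (Fin.last n) = true))).card =
      (univ.filter (IsLeftFactor (n := n + 1))).card :=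
    Finset.card_filter_add_card_filter_not _
  have htrue : ((univ.filter (IsLeftFactor (n := n + 1))).filter
        (fun w => w (Fin.last n) = true)).card =
      (univ.filter (IsLeftFactor (n := n))).card := by
    refine Finset.card_bij' (fun w _ => Fin.init w) (fun w _ => Fin.snoc w true)
      ?_ ?_ ?_ ?_
    · intro a ha
      simp only [mem_filter, mem_univ, true_and] at ha ⊢
      exact ((isLeftFactor_succ_iff a).mp ha.1).1
    · intro a ha
      simp only [mem_filter, mem_univ, true_and] at ha ⊢
      refine ⟨(isLeftFactor_succ_iff _).mpr ⟨?_, ?_⟩, ?_⟩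
      · rw [Fin.init_snoc]; exact ha
      · rw [Fin.snoc_last]; intro h; cases h
      · rw [Fin.snoc_last]
    · intro a ha
      simp only [mem_filter, mem_univ, true_and] at ha
      show Fin.snoc (Fin.init a) true = a
      rw [← ha.2, Fin.snoc_init_self]
    · intro a _
      exact Fin.init_snoc (α := fun _ => Bool) true a
  have hfalse : ((univ.filter (IsLeftFactor (n := n + 1))).filter
        (fun w => ¬ (w (Fin.last n) = true))).card =
      ((univ.filter (IsLeftFactor (n := n))).filter
        (fun w => downs w n < ups w n)).card := by
    refine Finset.card_bij' (fun w _ => Fin.init w) (fun w _ => Fin.snoc w false)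
      ?_ ?_ ?_ ?_
    · intro a ha
      simp only [mem_filter, mem_univ, true_and] at ha ⊢
      obtain ⟨h1, h2⟩ := (isLeftFactor_succ_iff a).mp ha.1
      exact ⟨h1, h2 (by simpa using ha.2)⟩
    · intro a ha
      simp only [mem_filter, mem_univ, true_and] at ha ⊢
      refine ⟨(isLeftFactor_succ_iff _).mpr ⟨?_, ?_⟩, ?_⟩
      · rw [Fin.init_snoc]; exact ha.1
      · rw [Fin.init_snoc]; intro _; exact ha.2
      · rw [Fin.snoc_last]; simp
    · intro a ha
      simp only [mem_filter, mem_univ, true_and] at ha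
      have h2 : a (Fin.last n) = false := by simpa using ha.2
      show Fin.snoc (Fin.init a) false = a
      rw [← h2, Fin.snoc_init_self]
    · intro a _
      exact Fin.init_snoc (α := fun _ => Bool) false a
  have hSD : ((univ.filter (IsLeftFactor (n := n))).filter
        (fun w => downs w n < ups w n)).card +
      ((univ.filter (IsLeftFactor (n := n))).filter
        (fun w => ¬ downs w n < ups w n)).card =
      (univ.filter (IsLeftFactor (n := n))).card :=
    Finset.card_filter_add_card_filter_not _
  have hDyck : (univ.filter (IsLeftFactor (n := n))).filter
        (fun w => ¬ downs w n < ups w n) = univ.filter (IsDyckWord (n := n)) := by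
    ext w
    simp only [mem_filter, mem_univ, true_and]
    constructor
    · rintro ⟨h1, h2⟩
      show IsLeftFactor w ∧ ups w n = downs w n
      exact ⟨h1, le_antisymm (Nat.le_of_not_lt h2) (h1 n le_rfl)⟩
    · intro h
      have h' : IsLeftFactor w ∧ ups w n = downs w n := h
      exact ⟨h'.1, Nat.not_lt.mpr (le_of_eq h'.2)⟩
  have hcards : ((univ.filter (IsLeftFactor (n := n))).filter
        (fun w => ¬ downs w n < ups w n)).card = (univ.filter (IsDyckWord (n := n))).card :=
    congrArg Finset.card hDyck
  linarith [hsplit, htrue, hfalse, hSD, hcards]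

lemma card_dyck_any (m : ℕ) :
    Nat.card {w : Fin m → Bool // IsDyckWord w} = if 2 ∣ m then catalan (m / 2) else 0 := by
  by_cases h : 2 ∣ m
  · obtain ⟨k, rfl⟩ := h
    rw [if_pos ⟨k, rfl⟩, card_dyck k]
    congr 1
    omega
  · rw [if_neg h]
    exact card_dyck_odd m h

lemma card_leftFactor_zero : Nat.card {w : Fin 0 → Bool // IsLeftFactor w} = 1 := by
  have : Unique {w : Fin 0 → Bool // IsLeftFactor w} := by
    refine ⟨⟨⟨fun i => i.elim0, fun i hi => ?_⟩⟩, fun a => ?_⟩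
    · interval_cases i
      rw [ups_zero, downs_zero]
    · apply Subtype.ext
      funext j
      exact j.elim0
  exact Nat.card_unique

lemma card_leftFactor (n : ℕ) :
    Nat.card {w : Fin n → Bool // IsLeftFactor w} = n.choose (n / 2) := by
  induction n with
  | zero => exact card_leftFactor_zero
  | succ k ih =>
    have hrec := card_leftFactor_succ k
    rw [ih, card_dyck_any k] at hrec
    rcases Nat.even_or_odd k with ⟨m, hm⟩ | ⟨m, hm⟩
    · -- k = m + m
      subst hm
      rw [if_pos ⟨m, by omega⟩] at hrec
      have hd1 : (m + m) / 2 = m := by omega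
      rw [hd1] at hrec
      have hd2 : (m + m + 1) / 2 = m := by omega
      rw [hd2]
      rcases Nat.eq_zero_or_pos m with rfl | hm0
      · simpa using hrec
      · obtain ⟨j, rfl⟩ : ∃ j, m = j + 1 := ⟨m - 1, by omega⟩
        have hcB : (j + 1 + 1) * catalan (j + 1) = (j + 1 + (j + 1)).choose (j + 1) := by
          have := succ_mul_catalan_eq_centralBinom (j + 1)
          rwa [show Nat.centralBinom (j + 1) = (2 * (j + 1)).choose (j + 1) from rfl,
            show 2 * (j + 1) = j + 1 + (j + 1) by omega] at this
        have hratio : (j + 1 + (j + 1)).choose (j + 1) * (j + 1) =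
            (j + 1 + (j + 1)).choose j * (j + 1 + (j + 1) - j) :=
          Nat.choose_succ_right_eq _ j
        have hPeq : (j + 1 + (j + 1)).choose j = (j + 1) * catalan (j + 1) := by
          apply Nat.eq_of_mul_eq_mul_left (show 0 < j + 1 + 1 by omega)
          calc (j + 1 + 1) * ((j + 1 + (j + 1)).choose j)
              = (j + 1 + (j + 1)).choose j * (j + 1 + (j + 1) - j) := by
                rw [show j + 1 + (j + 1) - j = j + 1 + 1 by omega]; ring
            _ = (j + 1 + (j + 1)).choose (j + 1) * (j + 1) := hratio.symm
            _ = ((j + 1 + 1) * catalan (j + 1)) * (j + 1) := by rw [← hcB]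
            _ = (j + 1 + 1) * ((j + 1) * catalan (j + 1)) := by ring
        have hpascal : (j + 1 + (j + 1) + 1).choose (j + 1) =
            (j + 1 + (j + 1)).choose j + (j + 1 + (j + 1)).choose (j + 1) :=
          Nat.choose_succ_succ _ j
        have hC : (j + 1 + (j + 1)).choose (j + 1) =
            (j + 1) * catalan (j + 1) + catalan (j + 1) := by
          rw [← hcB]; ring
        omega
    · -- k = 2 * m + 1
      subst hm
      rw [if_neg (by omega)] at hrec
      have hd1 : (2 * m + 1) / 2 = m := by omega
      rw [hd1] at hrec
      have hd2 : (2 * m + 1 + 1) / 2 = m + 1 := by omega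
      rw [hd2]
      have hpascal : (2 * m + 1 + 1).choose (m + 1) =
          (2 * m + 1).choose m + (2 * m + 1).choose (m + 1) :=
        Nat.choose_succ_succ _ m
      have hsymm : (2 * m + 1).choose (m + 1) = (2 * m + 1).choose m := by
        have := Nat.choose_symm (show m + 1 ≤ 2 * m + 1 by omega)
        rw [show 2 * m + 1 - (m + 1) = m by omega] at this
        exact this.symm
      omega

lemma card_sym_le (n : ℕ) :
    Nat.card {w : Fin (2 * n) → Bool // IsDyckWord w ∧ revSwap w = w} ≤ n.choose (n / 2) := by
  rw [← card_leftFactor n]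
  have hle : n ≤ 2 * n := by omega
  have key : ∀ w : Fin (2 * n) → Bool, IsDyckWord w →
      IsLeftFactor (fun j : Fin n => w (Fin.castLE hle j)) := by
    intro w hw i hi
    rw [ups_castLE _ _ hi, downs_castLE _ _ hi]
    exact hw.1 i (by omega)
  apply Nat.card_le_card_of_injective
    (fun w : {w : Fin (2 * n) → Bool // IsDyckWord w ∧ revSwap w = w} =>
      (⟨fun j : Fin n => w.1 (Fin.castLE hle j), key w.1 w.2.1⟩ :
        {v : Fin n → Bool // IsLeftFactor v}))
  intro a b h
  have hval := congrArg Subtype.val h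
  have hfirst : ∀ j : Fin (2 * n), (j : ℕ) < n → a.1 j = b.1 j := by
    intro j hj
    have := congrFun hval ⟨(j : ℕ), hj⟩
    simpa only [Fin.castLE_mk, Fin.eta] using this
  apply Subtype.ext
  funext j
  rcases lt_or_ge (j : ℕ) n with hj | hj
  · exact hfirst j hj
  · have hrev : ((Fin.rev j : Fin (2 * n)) : ℕ) < n := by
      have h1 := j.isLt
      rw [Fin.val_rev]
      omega
    have ha := congrFun a.2.2 j
    have hb := congrFun b.2.2 j
    simp only [revSwap] at ha hb
    rw [← ha, ← hb, hfirst _ hrev]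

lemma choose_half_le (n : ℕ) : n.choose (n / 2) ≤ 2 ^ n := by
  rw [← Nat.sum_range_choose n]
  exact Finset.single_le_sum (f := fun i => n.choose i) (fun i _ => Nat.zero_le _)
    (Finset.mem_range.mpr (by omega))

lemma catalan_pos' (n : ℕ) : 0 < catalan n := by
  rcases Nat.eq_zero_or_pos (catalan n) with h | h
  · exfalso
    have h1 := succ_mul_catalan_eq_centralBinom n
    rw [h, Nat.mul_zero] at h1
    exact (Nat.centralBinom_pos n).ne' h1.symm
  · exact h

lemma catalan_cast_eq (n : ℕ) : (catalan n : ℝ) = ((2 * n).choose n : ℝ) / (n + 1) := by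
  rw [eq_div_iff (by positivity : ((n : ℝ) + 1) ≠ 0)]
  have h : ((n + 1) * catalan n : ℕ) = ((2 * n).choose n : ℕ) := succ_mul_catalan_eq_centralBinom n
  have h2 : (((2 * n).choose n : ℕ) : ℝ) = ((n : ℝ) + 1) * (catalan n : ℝ) := by
    rw [← h]; push_cast; ring
  rw [h2]; ring

lemma tendsto_ratio :
    Filter.Tendsto (fun n : ℕ => (n.choose (n / 2) : ℝ) / (((2 * n).choose n : ℝ) / (n + 1)))
      Filter.atTop (nhds 0) := by
  have h6 : Filter.Tendsto (fun n : ℕ => 6 * ((n : ℝ) ^ 2 / 2 ^ n)) Filter.atTop (nhds 0) := by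
    have := (tendsto_pow_const_div_const_pow_of_one_lt 2
      (by norm_num : (1 : ℝ) < 2)).const_mul (6 : ℝ)
    simpa using this
  apply tendsto_of_tendsto_of_tendsto_of_le_of_le' tendsto_const_nhds h6
  · filter_upwards with n
    positivity
  · filter_upwards [Filter.eventually_ge_atTop 1] with n hn
    have hn' : (1 : ℝ) ≤ (n : ℝ) := by exact_mod_cast hn
    have hC : (0 : ℝ) < ((2 * n).choose n : ℝ) := by
      exact_mod_cast Nat.choose_pos (by omega)
    rw [div_div_eq_mul_div, ← mul_div_assoc,
      div_le_div_iff₀ hC (by positivity : (0 : ℝ) < 2 ^ n)]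
    have hA : (n.choose (n / 2) : ℝ) ≤ 2 ^ n := by
      exact_mod_cast choose_half_le n
    have h4 : (4 : ℝ) ^ n ≤ (2 * (n : ℝ) + 1) * ((2 * n).choose n : ℝ) := by
      have := Nat.four_pow_le_two_mul_add_one_mul_central_binom n
      exact_mod_cast this
    have h2 : (2 : ℝ) ^ n * 2 ^ n = 4 ^ n := by
      rw [← mul_pow]; norm_num
    calc (n.choose (n / 2) : ℝ) * ((n : ℝ) + 1) * 2 ^ n
        ≤ 2 ^ n * ((n : ℝ) + 1) * 2 ^ n := by
          have hp : (0 : ℝ) ≤ ((n : ℝ) + 1) * 2 ^ n := by positivity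
          calc (n.choose (n / 2) : ℝ) * ((n : ℝ) + 1) * 2 ^ n
              = (n.choose (n / 2) : ℝ) * (((n : ℝ) + 1) * 2 ^ n) := by ring
            _ ≤ 2 ^ n * (((n : ℝ) + 1) * 2 ^ n) := by
                apply mul_le_mul_of_nonneg_right hA hp
            _ = 2 ^ n * ((n : ℝ) + 1) * 2 ^ n := by ring
      _ = ((n : ℝ) + 1) * 4 ^ n := by rw [← h2]; ring
      _ ≤ ((n : ℝ) + 1) * ((2 * (n : ℝ) + 1) * ((2 * n).choose n : ℝ)) := by
          apply mul_le_mul_of_nonneg_left h4 (by positivity)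
      _ ≤ 6 * (n : ℝ) ^ 2 * ((2 * n).choose n : ℝ) := by
          have key : ((n : ℝ) + 1) * (2 * (n : ℝ) + 1) ≤ 6 * (n : ℝ) ^ 2 := by
            nlinarith [hn', sq_nonneg ((n : ℝ) - 1)]
          calc ((n : ℝ) + 1) * ((2 * (n : ℝ) + 1) * ((2 * n).choose n : ℝ))
              = (((n : ℝ) + 1) * (2 * (n : ℝ) + 1)) * ((2 * n).choose n : ℝ) := by ring
            _ ≤ 6 * (n : ℝ) ^ 2 * ((2 * n).choose n : ℝ) :=
                mul_le_mul_of_nonneg_right key hC.le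

open scoped Classical in
lemma card_partition (n : ℕ) :
    Nat.card {w : Fin (2 * n) → Bool // IsDyckWord w ∧ revSwap w = w} +
      Nat.card {w : Fin (2 * n) → Bool // IsDyckWord w ∧ revSwap w ≠ w} = catalan n := by
  rw [← card_dyck n]
  have e1 : {w : Fin (2 * n) → Bool // IsDyckWord w ∧ revSwap w = w} ≃
      {x : {w : Fin (2 * n) → Bool // IsDyckWord w} // revSwap x.1 = x.1} :=
    (Equiv.subtypeSubtypeEquivSubtypeInter _ _).symm
  have e2 : {w : Fin (2 * n) → Bool // IsDyckWord w ∧ revSwap w ≠ w} ≃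
      {x : {w : Fin (2 * n) → Bool // IsDyckWord w} // ¬ revSwap x.1 = x.1} :=
    (Equiv.subtypeSubtypeEquivSubtypeInter _ _).symm
  rw [Nat.card_congr e1, Nat.card_congr e2, ← Nat.card_sum,
    Nat.card_congr (Equiv.sumCompl (fun x : {w : Fin (2 * n) → Bool // IsDyckWord w} =>
      revSwap x.1 = x.1))]

open Filter

/-- For every `n ≥ 1` the number of Dyck words of length `2n` fixed by the
reversal-with-swap involution is at most `C(n, ⌊n/2⌋)`; moreover
`C(n, ⌊n/2⌋)/c_n → 0`, and hence the proportion of asymmetric Dyck words among all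
Dyck words of length `2n` tends to `1` as `n → ∞`. -/
theorem stmt15 :
    (∀ n : ℕ, 1 ≤ n →
      Nat.card {w : Fin (2 * n) → Bool // IsDyckWord w ∧ revSwap w = w} ≤ n.choose (n / 2)) ∧
    Tendsto (fun n : ℕ => (n.choose (n / 2) : ℝ) / (((2 * n).choose n : ℝ) / (n + 1)))
      atTop (nhds 0) ∧
    Tendsto (fun n : ℕ =>
        (Nat.card {w : Fin (2 * n) → Bool // IsDyckWord w ∧ revSwap w ≠ w} : ℝ) /
          (((2 * n).choose n : ℝ) / (n + 1)))
      atTop (nhds 1) := by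

  refine ⟨fun n _ => card_sym_le n, tendsto_ratio, ?_⟩
  set s : ℕ → ℕ := fun n =>
    Nat.card {w : Fin (2 * n) → Bool // IsDyckWord w ∧ revSwap w = w} with hs
  set a : ℕ → ℕ := fun n =>
    Nat.card {w : Fin (2 * n) → Bool // IsDyckWord w ∧ revSwap w ≠ w} with ha
  have hden : ∀ n : ℕ, (0 : ℝ) < ((2 * n).choose n : ℝ) / (n + 1) := by
    intro n
    apply div_pos _ (by positivity)
    exact_mod_cast Nat.choose_pos (by omega)
  -- s n / denominator → 0
  have hs0 : Tendsto (fun n : ℕ => (s n : ℝ) / (((2 * n).choose n : ℝ) / (n + 1)))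
      atTop (nhds 0) := by
    apply tendsto_of_tendsto_of_tendsto_of_le_of_le' tendsto_const_nhds tendsto_ratio
    · filter_upwards with n
      exact div_nonneg (by positivity) (hden n).le
    · filter_upwards with n
      have hnum : (s n : ℝ) ≤ (n.choose (n / 2) : ℝ) := by exact_mod_cast card_sym_le n
      exact div_le_div_of_nonneg_right hnum (hden n).le |>.trans le_rfl
  -- rewrite asym ratio as 1 - sym ratio
  have hfun : ∀ n : ℕ, (a n : ℝ) / (((2 * n).choose n : ℝ) / (n + 1)) =
      1 - (s n : ℝ) / (((2 * n).choose n : ℝ) / (n + 1)) := by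
    intro n
    have hpart := card_partition n
    have hcat : (catalan n : ℝ) = ((2 * n).choose n : ℝ) / (n + 1) := catalan_cast_eq n
    have haR : (a n : ℝ) = (catalan n : ℝ) - (s n : ℝ) := by
      have : (s n : ℝ) + (a n : ℝ) = (catalan n : ℝ) := by
        have h2 : ((s n + a n : ℕ) : ℝ) = ((catalan n : ℕ) : ℝ) := by
          exact_mod_cast congrArg (fun k : ℕ => (k : ℝ)) hpart
        push_cast at h2
        exact h2
      linarith
    rw [haR, hcat, sub_div, div_self (hden n).ne']
  have := (tendsto_const_nhds (x := (1 : ℝ)) (f := atTop)).sub hs0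
  rw [sub_zero] at this
  refine this.congr fun n => (hfun n).symm
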